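/- Let r be a prime, a ≥ 1 an integer, e = r^a, and let ζ ∈ ℂ be a primitive e-th root of unity. Write R = ℤ[ζ] and let 𝔭 be the ideal of R generated by 1 − ζ. Let A be an R-algebra that is finitely generated as an R-module, and let M, N be A-modules carrying compatible R-module structures that are free of finite rank as R-modules. If Hom_{ℂ⊗_R A}(ℂ⊗_R M, ℂ⊗_R N) ≠ {0}, then Hom_A(M/𝔭M, N/𝔭N) ≠ {0}. -/

import Mathlib

open TensorProduct

section BaseChange

variable (R : Type) [CommRing R] (S : Type) [CommRing S] [Algebra R S]
  (A : Type) [Ring A] [Algebra R A]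
  (M : Type) [AddCommGroup M] [Module R M] [Module A M] [IsScalarTower R A M]

/-- The action of `A` on `S ⊗[R] M` through the right tensor factor. -/
noncomputable def moduleTensorRight : Module A (S ⊗[R] M) :=
  Module.compHom _
    (((Module.End.baseChangeHom R S M).toRingHom).comp
      (Module.toModuleEnd R M (S := A)))

/-- The natural module structure of `S ⊗[R] A` on `S ⊗[R] M`, where `S` acts through the
left factor and `A` through the right factor. -/
noncomputable def moduleTensorTensor : Module (S ⊗[R] A) (S ⊗[R] M) :=
  letI : Module A (S ⊗[R] M) := moduleTensorRight R S A M
  letI : IsScalarTower R A (S ⊗[R] M) := by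
    constructor
    intro r x m
    show (LinearMap.baseChange S (DistribMulAction.toLinearMap R M (r • x))) m
        = r • (LinearMap.baseChange S (DistribMulAction.toLinearMap R M x)) m
    have h : DistribMulAction.toLinearMap R M (r • x)
        = r • DistribMulAction.toLinearMap R M x := by
      ext m'
      exact smul_assoc r x m'
    rw [h, LinearMap.baseChange_smul, LinearMap.smul_apply]
  letI : SMulCommClass S A (S ⊗[R] M) := by
    constructor
    intro s x m
    exact ((LinearMap.baseChange S (DistribMulAction.toLinearMap R M x)).map_smul s m).symm
  TensorProduct.Algebra.module

variable (N : Type) [AddCommGroup N] [Module R N] [Module A N] [IsScalarTower R A N]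

/-- The statement that there is a nonzero `S ⊗[R] A`-linear map `S ⊗[R] M → S ⊗[R] N`. -/
noncomputable def HomBaseChangeNonzero : Prop :=
  letI := moduleTensorTensor R S A M
  letI := moduleTensorTensor R S A N
  ∃ f : (S ⊗[R] M) →ₗ[S ⊗[R] A] (S ⊗[R] N), f ≠ 0

end BaseChange

/-- `ℤ[ζ]`, the subring of `ℂ` generated by `ζ`. -/
noncomputable def cycloRing (ζ : ℂ) : Subalgebra ℤ ℂ := Algebra.adjoin ℤ {ζ}

/-- `ζ` as an element of `ℤ[ζ]`. -/
noncomputable def cycloZeta (ζ : ℂ) : cycloRing ζ :=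
  ⟨ζ, Algebra.self_mem_adjoin_singleton ℤ ζ⟩

/-- The `A`-submodule `𝔭M = (1 - ζ)M` of an `A`-module `M` with compatible
`ℤ[ζ]`-module structure. -/
noncomputable def pModule (ζ : ℂ) (A : Type) [Ring A] [Algebra (cycloRing ζ) A]
    (M : Type) [AddCommGroup M] [Module (cycloRing ζ) M] [Module A M]
    [IsScalarTower (cycloRing ζ) A M] : Submodule A M :=
  LinearMap.range ((1 - cycloZeta ζ) • (LinearMap.id : M →ₗ[A] M))

/-!
For generators `a₁, …, aₙ` of `A` over `R = ℤ[ζ]`, `Hom_A(M, N)` is the kernel of the `R`-linear map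
`h ↦ (aᵢ h - h aᵢ)ᵢ` on `Hom_R(M, N)`. If it vanished, this map would stay injective after the flat
base change `R → ℂ`; as `M` is finitely presented, `ℂ ⊗ Hom_R(M, N) = Hom_ℂ(ℂ ⊗ M, ℂ ⊗ N)`, and the
base-changed map cuts out `Hom_{ℂ⊗A}(ℂ ⊗ M, ℂ ⊗ N)`, which would then vanish too.

So `Hom_A(M, N)` is a nonzero, finitely generated, torsion-free `R`-module, and `π = 1 - ζ` is a
nonzero nonunit, so by Nakayama's lemma some `h` is not divisible by `π`. As `N` is torsion-free,
an `A`-linear map with image in `πN` is divisible by `π`; hence `h` induces a nonzero map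
`M/πM → N/πN`.
-/

section FlatBaseChange

variable {R : Type*} [CommRing R] {S : Type*} [CommRing S] [Algebra R S]
  {M N : Type*} [AddCommGroup M] [AddCommGroup N] [Module R M] [Module R N]

def LinearMap.commutatorMap (u : M →ₗ[R] M) (v : N →ₗ[R] N) : (M →ₗ[R] N) →ₗ[R] (M →ₗ[R] N) :=
  LinearMap.llcomp R M N N v - LinearMap.lcomp R N u

lemma LinearMap.commutatorMap_apply (u : M →ₗ[R] M) (v : N →ₗ[R] N) (h : M →ₗ[R] N) :
    commutatorMap u v h = v ∘ₗ h - h ∘ₗ u := rfl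

lemma LinearMap.baseChange_commutatorMap (u : M →ₗ[R] M) (v : N →ₗ[R] N) (h : M →ₗ[R] N) :
    (commutatorMap u v h).baseChange S =
      commutatorMap (u.baseChange S) (v.baseChange S) (h.baseChange S) := by
  simp only [commutatorMap_apply, baseChange_sub, baseChange_comp]

lemma IsBaseChange.injective_of_flat [Module.Flat R S]
    {H P H' P' : Type*} [AddCommMonoid H] [AddCommMonoid P] [Module R H] [Module R P]
    [AddCommMonoid H'] [AddCommMonoid P'] [Module R H'] [Module R P'] [Module S H'] [Module S P']
    [IsScalarTower R S H'] [IsScalarTower R S P'] {φ : H →ₗ[R] H'} {ψ : P →ₗ[R] P'}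
    (hφ : IsBaseChange S φ) (hψ : IsBaseChange S ψ) {g : H →ₗ[R] P} {g' : H' →ₗ[S] P'}
    (comm : ψ ∘ₗ g = g'.restrictScalars R ∘ₗ φ) (hg : Function.Injective g) :
    Function.Injective g' := by
  have key : ∀ w, g' (hφ.equiv w) = hψ.equiv (g.lTensor S w) := by
    intro w
    induction w using TensorProduct.induction_on with
    | zero => simp
    | tmul s h => simpa [IsBaseChange.equiv_tmul] using congr(s • $comm h).symm
    | add w₁ w₂ h₁ h₂ => simp [h₁, h₂]
  intro x y hxy
  obtain ⟨x, rfl⟩ := hφ.equiv.surjective x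
  obtain ⟨y, rfl⟩ := hφ.equiv.surjective y
  rw [key, key] at hxy
  exact congrArg _ (Module.Flat.lTensor_preserves_injective_linearMap g hg
    (hψ.equiv.injective hxy))

end FlatBaseChange

lemma Module.Flat.of_injective_algebraMap (R L : Type*) [CommRing R] [IsDomain R] [Field L]
    [Algebra R L] (hinj : Function.Injective (algebraMap R L)) : Module.Flat R L := by
  let _ : Algebra (FractionRing R) L := RingHom.toAlgebra (IsFractionRing.lift hinj)
  have : IsScalarTower R (FractionRing R) L :=
    IsScalarTower.of_algebraMap_eq fun x => (IsFractionRing.lift_algebraMap hinj x).symm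
  have : Module.Flat R (FractionRing R) := IsLocalization.flat _ (nonZeroDivisors R)
  exact Module.Flat.trans R (FractionRing R) L

section AlgebraModules

variable {R : Type*} [CommRing R] {S : Type*} [CommRing S] [Algebra R S]
  {A : Type*} [Ring A] [Algebra R A]
  {M N : Type*} [AddCommGroup M] [AddCommGroup N] [Module R M] [Module R N]
  [Module A M] [Module A N] [IsScalarTower R A M] [IsScalarTower R A N]

def LinearMap.toLinearMapOfSpan (h : M →ₗ[R] N) {s : Set A} (hs : Submodule.span R s = ⊤)
    (hcomm : ∀ a ∈ s, ∀ m, h (a • m) = a • h m) : M →ₗ[A] N where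
  toFun := h
  map_add' := h.map_add
  map_smul' a := by
    have ha : a ∈ Submodule.span R s := hs ▸ trivial
    induction ha using Submodule.span_induction with
    | mem a ha => exact hcomm a ha
    | zero => simp
    | add a b _ _ ha hb => intro m; simp [add_smul, ha, hb]
    | smul r a _ ha => intro m; simp [smul_assoc, ha]

theorem eq_zero_of_commute_baseChange [Module.Flat R S] [Module.FinitePresentation R M]
    (hzero : ∀ h : M →ₗ[A] N, h = 0) {n : ℕ} {a : Fin n → A}
    (ha : Submodule.span R (Set.range a) = ⊤) (F : (S ⊗[R] M) →ₗ[S] (S ⊗[R] N))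
    (hF : ∀ i, (DistribSMul.toLinearMap R N (a i)).baseChange S ∘ₗ F =
      F ∘ₗ (DistribSMul.toLinearMap R M (a i)).baseChange S) : F = 0 := by
  let u i := DistribSMul.toLinearMap R M (a i)
  let v i := DistribSMul.toLinearMap R N (a i)
  let g := LinearMap.pi fun i => LinearMap.commutatorMap (u i) (v i)
  let g' := LinearMap.pi fun i =>
    LinearMap.commutatorMap ((u i).baseChange S) ((v i).baseChange S)
  have hg : Function.Injective g := by
    rw [← LinearMap.ker_eq_bot, LinearMap.ker_eq_bot']
    intro h hh
    have hcomm : ∀ x ∈ Set.range a, ∀ m, h (x • m) = x • h m := by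
      rintro _ ⟨i, rfl⟩ m
      have := congr($(congr_fun hh i) m)
      simp only [g, u, v, LinearMap.pi_apply, LinearMap.commutatorMap_apply, LinearMap.sub_apply,
        LinearMap.comp_apply, DistribSMul.toLinearMap_apply] at this
      exact (sub_eq_zero.mp this).symm
    exact congr(LinearMap.restrictScalars R $(hzero (h.toLinearMapOfSpan ha hcomm)))
  have hφ := Module.FinitePresentation.isBaseChange_map R M N S
  have hψ := IsBaseChange.pi (fun _ : Fin n => LinearMap.baseChangeHom R S M N) fun _ => hφ
  have hg' := hφ.injective_of_flat hψ (g := g) (g' := g') (by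
    ext h i : 2
    exact LinearMap.baseChange_commutatorMap (u i) (v i) h) hg
  refine hg' ((funext fun i => ?_).trans (map_zero g').symm)
  exact sub_eq_zero.mpr (hF i)

lemma range_smul_id_le_comap (π : R) (h : M →ₗ[A] N) :
    LinearMap.range (π • LinearMap.id : M →ₗ[A] M) ≤
      (LinearMap.range (π • LinearMap.id : N →ₗ[A] N)).comap h := by
  rintro _ ⟨m, rfl⟩
  exact ⟨h m, by simp⟩

def reduceMod (π : R) (h : M →ₗ[A] N) :
    (M ⧸ LinearMap.range (π • LinearMap.id : M →ₗ[A] M)) →ₗ[A]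
      (N ⧸ LinearMap.range (π • LinearMap.id : N →ₗ[A] N)) :=
  Submodule.mapQ _ _ h (range_smul_id_le_comap π h)

lemma exists_eq_smul_of_reduceMod_eq_zero {π : R} (hπ : IsSMulRegular N π) {h : M →ₗ[A] N}
    (h0 : reduceMod π h = 0) : ∃ h' : M →ₗ[A] N, h = π • h' := by
  have hmem : ∀ m, h m ∈ LinearMap.range (π • LinearMap.id : N →ₗ[A] N) := fun m => by
    simpa [reduceMod] using congr($h0 (Submodule.Quotient.mk m))
  let e := LinearEquiv.ofInjective (π • LinearMap.id : N →ₗ[A] N) (by exact hπ)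
  refine ⟨e.symm.toLinearMap ∘ₗ h.codRestrict _ hmem, LinearMap.ext fun m => ?_⟩
  exact congr(Subtype.val $(e.apply_symm_apply ⟨h m, hmem m⟩)).symm

lemma Module.exists_forall_ne_smul [IsDomain R] {H : Type*} [AddCommGroup H] [Module R H]
    [Module.Finite R H] [Module.IsTorsionFree R H] [Nontrivial H] {π : R} (hπ : ¬IsUnit π) :
    ∃ h : H, ∀ h' : H, h ≠ π • h' := by
  by_contra! hall
  obtain ⟨r, hr1, hr⟩ := Submodule.exists_sub_one_mem_and_smul_eq_zero_of_fg_of_le_smul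
    (Ideal.span {π}) (⊤ : Submodule R H) Module.Finite.fg_top fun h _ => by
      obtain ⟨h', rfl⟩ := hall h
      exact Submodule.smul_mem_smul (Ideal.mem_span_singleton_self π) trivial
  have hr0 : r ≠ 0 := by
    rintro rfl
    obtain ⟨x, hx⟩ := Ideal.mem_span_singleton'.mp hr1
    exact hπ (IsUnit.of_mul_eq_one_right (-x) (by linear_combination -hx))
  obtain ⟨h, hh⟩ := exists_ne (0 : H)
  exact hh ((smul_eq_zero_iff_right hr0).mp (hr h trivial))

theorem exists_reduceMod_ne_zero [IsDomain R] [Module.IsTorsionFree R N]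
    [Module.Finite R (M →ₗ[A] N)] [Nontrivial (M →ₗ[A] N)] {π : R} (hπ0 : π ≠ 0)
    (hπ : ¬IsUnit π) : ∃ h : M →ₗ[A] N, reduceMod π h ≠ 0 := by
  obtain ⟨h, hh⟩ := Module.exists_forall_ne_smul (H := M →ₗ[A] N) hπ
  refine ⟨h, fun h0 => ?_⟩
  obtain ⟨h', rfl⟩ := exists_eq_smul_of_reduceMod_eq_zero (IsSMulRegular.of_ne_zero hπ0) h0
  exact hh h' rfl

lemma Module.Finite.linearMap_of_isNoetherianRing [IsNoetherianRing R] [Module.Free R M]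
    [Module.Finite R M] [Module.Finite R N] :
    Module.Finite R (M →ₗ[A] N) :=
  .of_injective (LinearMap.restrictScalarsₗ R A M N R) fun _ _ h =>
    LinearMap.ext fun m => congr($h m)

end AlgebraModules

section TensorTensor

variable {R : Type} [CommRing R] {S : Type} [CommRing S] [Algebra R S]
  {A : Type} [Ring A] [Algebra R A]
  {M N : Type} [AddCommGroup M] [AddCommGroup N] [Module R M] [Module R N]
  [Module A M] [Module A N] [IsScalarTower R A M] [IsScalarTower R A N]

lemma moduleTensorTensor_tmul_smul (s : S) (x : A) (t : S ⊗[R] M) :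
    (letI := moduleTensorTensor R S A M
     (s ⊗ₜ[R] x) • t) = s • (DistribSMul.toLinearMap R M x).baseChange S t := rfl

lemma moduleTensorTensor_tmul_one_smul (s : S) (t : S ⊗[R] M) :
    (letI := moduleTensorTensor R S A M
     (s ⊗ₜ[R] (1 : A)) • t) = s • t := by
  have h1 : DistribSMul.toLinearMap R M (1 : A) = LinearMap.id := LinearMap.ext (one_smul A)
  rw [moduleTensorTensor_tmul_smul, h1, LinearMap.baseChange_id, LinearMap.id_apply]

theorem exists_ne_zero_of_homBaseChangeNonzero [Module.Flat R S] [Module.Finite R A]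
    [Module.FinitePresentation R M] (hne : HomBaseChangeNonzero R S A M N) :
    ∃ h : M →ₗ[A] N, h ≠ 0 := by
  let _ := moduleTensorTensor R S A M
  let _ := moduleTensorTensor R S A N
  obtain ⟨f, hf⟩ := hne
  by_contra! hzero
  obtain ⟨n, a, ha⟩ := Module.Finite.exists_fin (R := R) (M := A)
  let F : (S ⊗[R] M) →ₗ[S] (S ⊗[R] N) :=
    { toFun := f
      map_add' := f.map_add
      map_smul' := fun s t => by
        simpa [moduleTensorTensor_tmul_one_smul] using f.map_smul (s ⊗ₜ[R] (1 : A)) t }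
  refine hf (LinearMap.ext fun t => congr($(eq_zero_of_commute_baseChange hzero ha F fun i =>
    LinearMap.ext fun t => ?_) t))
  simpa [moduleTensorTensor_tmul_smul, F] using (f.map_smul ((1 : S) ⊗ₜ[R] a i) t).symm

end TensorTensor

section Cyclotomic

open Polynomial

instance (ζ : ℂ) : IsNoetherianRing (cycloRing ζ) :=
  have := Algebra.FiniteType.adjoin_of_finite (R := ℤ) (Set.finite_singleton ζ)
  Algebra.FiniteType.isNoetherianRing ℤ (Algebra.adjoin ℤ {ζ})

instance (ζ : ℂ) : Module.Flat (cycloRing ζ) ℂ :=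
  .of_injective_algebraMap _ _ Subtype.val_injective

lemma one_sub_cycloZeta_ne_zero {r a : ℕ} (hr : r.Prime) (ha : 1 ≤ a) {ζ : ℂ}
    (hζ : IsPrimitiveRoot ζ (r ^ a)) : 1 - cycloZeta ζ ≠ 0 := by
  have hζ1 : ζ ≠ 1 := hζ.ne_one (Nat.one_lt_pow (by omega) hr.one_lt)
  intro h
  exact hζ1 (sub_eq_zero.mp congr(Subtype.val $h)).symm

/-- If `(1 - ζ) p(ζ) = 1` then `Φ_{r^a}` divides `1 - (1 - X) p`; evaluating at `1` gives `r ∣ 1`. -/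
lemma not_isUnit_one_sub_cycloZeta {r a : ℕ} (hr : r.Prime) (ha : 1 ≤ a) {ζ : ℂ}
    (hζ : IsPrimitiveRoot ζ (r ^ a)) : ¬IsUnit (1 - cycloZeta ζ) := by
  rintro ⟨u, hu⟩
  obtain ⟨k, rfl⟩ : ∃ k, a = k + 1 := ⟨a - 1, by omega⟩
  have : Fact r.Prime := ⟨hr⟩
  have hpos : 0 < r ^ (k + 1) := pow_pos hr.pos _
  obtain ⟨p, hp⟩ : ∃ p : ℤ[X], aeval ζ p = ((u⁻¹ : (cycloRing ζ)ˣ) : ℂ) := by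
    have hmem : ((u⁻¹ : (cycloRing ζ)ˣ) : ℂ) ∈ (aeval ζ : ℤ[X] →ₐ[ℤ] ℂ).range := by
      rw [← Algebra.adjoin_singleton_eq_range_aeval]
      exact ((u⁻¹ : (cycloRing ζ)ˣ) : cycloRing ζ).2
    exact hmem
  have hinv : (1 - ζ) * aeval ζ p = 1 := by
    rw [hp]
    have := congr(Subtype.val $(u.mul_inv))
    rw [hu] at this
    exact this
  have hroot : aeval ζ (1 - (1 - X) * p) = 0 := by
    simp only [map_sub, map_mul, map_one, aeval_X, hinv, sub_self]
  have hdvd : cyclotomic (r ^ (k + 1)) ℤ ∣ 1 - (1 - X) * p := by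
    rw [cyclotomic_eq_minpoly hζ hpos]
    exact minpoly.isIntegrallyClosed_dvd (hζ.isIntegral hpos) hroot
  have := eval_dvd (x := 1) hdvd
  rw [eval_one_cyclotomic_prime_pow] at this
  have := Int.le_of_dvd one_pos (by simpa using this)
  have := hr.two_le
  omega

end Cyclotomic

/-- Let `r` be a prime, `a ≥ 1`, `e = r^a`, `ζ ∈ ℂ` a primitive `e`-th root of unity,
`R = ℤ[ζ]` and `𝔭 = (1 - ζ) ⊆ R`.  Let `A` be an `R`-algebra which is finitely generated
as an `R`-module, and let `M`, `N` be `A`-modules carrying compatible `R`-module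
structures which are free of finite rank as `R`-modules.  If
`Hom_{ℂ⊗ᵣA}(ℂ⊗ᵣM, ℂ⊗ᵣN) ≠ 0` then `Hom_A(M/𝔭M, N/𝔭N) ≠ 0`. -/
theorem statement2 (r a : ℕ) (hr : r.Prime) (ha : 1 ≤ a) (ζ : ℂ)
    (hζ : IsPrimitiveRoot ζ (r ^ a))
    (A : Type) [Ring A] [Algebra (cycloRing ζ) A] [Module.Finite (cycloRing ζ) A]
    (M N : Type) [AddCommGroup M] [AddCommGroup N]
    [Module (cycloRing ζ) M] [Module (cycloRing ζ) N]
    [Module A M] [Module A N]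
    [IsScalarTower (cycloRing ζ) A M] [IsScalarTower (cycloRing ζ) A N]
    [Module.Free (cycloRing ζ) M] [Module.Finite (cycloRing ζ) M]
    [Module.Free (cycloRing ζ) N] [Module.Finite (cycloRing ζ) N]
    (hne : HomBaseChangeNonzero (cycloRing ζ) ℂ A M N) :
    ∃ f : (M ⧸ pModule ζ A M) →ₗ[A] (N ⧸ pModule ζ A N), f ≠ 0 := by
  have := Module.finitePresentation_of_projective (cycloRing ζ) M
  have := Module.Finite.linearMap_of_isNoetherianRing (R := cycloRing ζ) (A := A) (M := M) (N := N)
  obtain ⟨h, hh⟩ := exists_ne_zero_of_homBaseChangeNonzero hne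
  have := nontrivial_of_ne h 0 hh
  obtain ⟨f, hf⟩ := exists_reduceMod_ne_zero (A := A) (M := M) (N := N)
    (one_sub_cycloZeta_ne_zero hr ha hζ) (not_isUnit_one_sub_cycloZeta hr ha hζ)
  -- `pModule ζ A M` is by definition the range of `(1 - cycloZeta ζ) • id`.
  exact ⟨reduceMod _ f, hf⟩
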